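/- arXiv:2409.12053 — 7 statements merged into one kernel-verified Lean document; each statement's English description precedes it below -/
import Mathlib

section
/- Let S be a finite set and let f : 2^S → ℝ be a normalized monotone submodular function. Then for every subset A ⊆ S, f(A) = sup { x(A) : x ∈ P_f }, where the supremum is over the polymatroid of f; moreover the supremum is attained. -/
/-!
Greedy algorithm: adding the elements of `A` one at a time and giving each new element `v`
its marginal gain `f (insert v A') - f A'` produces a vector of the polymatroid whose total
weight on `A` telescopes to `f A`. Submodularity is what keeps every constraint `x(B) ≤ f B`
valid after each step, since the marginal gain of `v` over `A'` is at most that over `B ∩ A'`.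
-/

open Finset Function

section Greedy

variable {ι : Type*} [DecidableEq ι] {f : Finset ι → ℝ}

def polymatroid (f : Finset ι → ℝ) : Set (ι → ℝ) :=
  {x | (∀ i, 0 ≤ x i) ∧ ∀ B : Finset ι, ∑ i ∈ B, x i ≤ f B}

theorem update_marginal_mem_polymatroid (hmono : ∀ A B : Finset ι, A ⊆ B → f A ≤ f B)
    (hsub : ∀ A B : Finset ι, A ⊆ B → ∀ v ∉ B, f (insert v A) - f A ≥ f (insert v B) - f B)
    {A : Finset ι} {v : ι} (hv : v ∉ A) {x : ι → ℝ} (hx : x ∈ polymatroid f)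
    (hxA : ∀ i ∉ A, x i = 0) :
    update x v (f (insert v A) - f A) ∈ polymatroid f := by
  set c := f (insert v A) - f A
  obtain ⟨hx0, hxf⟩ := hx
  refine ⟨fun i => ?_, fun B => ?_⟩
  · rcases eq_or_ne i v with rfl | hiv
    · simpa [c] using hmono A _ (subset_insert i A)
    · simpa [update_of_ne hiv] using hx0 i
  by_cases hvB : v ∈ B
  swap
  · simpa [sum_update_of_notMem hvB] using hxf B
  have hBA : ∑ i ∈ B \ {v}, x i = ∑ i ∈ B ∩ A, x i := by
    refine (sum_subset (fun i hi => ?_) fun i hi hiA => hxA i ?_).symm <;> grind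
  have hgain := hsub (B ∩ A) A inter_subset_right v hv
  calc ∑ i ∈ B, update x v c i = c + ∑ i ∈ B ∩ A, x i := by
        rw [sum_update_of_mem hvB, hBA]
    _ ≤ c + f (B ∩ A) := by gcongr; exact hxf _
    _ ≤ f (insert v (B ∩ A)) := by linarith
    _ ≤ f B := hmono _ _ (insert_subset hvB inter_subset_left)

theorem exists_mem_polymatroid_sum_eq (hnorm : f ∅ = 0)
    (hmono : ∀ A B : Finset ι, A ⊆ B → f A ≤ f B)
    (hsub : ∀ A B : Finset ι, A ⊆ B → ∀ v ∉ B, f (insert v A) - f A ≥ f (insert v B) - f B)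
    (A : Finset ι) :
    ∃ x ∈ polymatroid f, (∀ i ∉ A, x i = 0) ∧ ∑ i ∈ A, x i = f A := by
  induction A using Finset.induction_on with
  | empty =>
    refine ⟨0, ⟨fun _ => le_rfl, fun B => ?_⟩, fun _ _ => rfl, by simp [hnorm]⟩
    simpa [hnorm] using hmono ∅ B (empty_subset B)
  | @insert v A hv ih =>
    obtain ⟨x, hx, hxA, hsum⟩ := ih
    refine ⟨update x v (f (insert v A) - f A),
      update_marginal_mem_polymatroid hmono hsub hv hx hxA, fun i hi => ?_, ?_⟩
    · rw [mem_insert, not_or] at hi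
      rw [update_of_ne hi.1]
      exact hxA i hi.2
    · rw [sum_update_of_mem (mem_insert_self v A), sdiff_singleton_eq_erase, erase_insert hv,
        hsum]
      ring

end Greedy

theorem polymatroid_sup_general {ι : Type*} [DecidableEq ι]
    (f : Finset ι → ℝ)
    (hnorm : f ∅ = 0)
    (hmono : ∀ A B : Finset ι, A ⊆ B → f A ≤ f B)
    (hsub : ∀ A B : Finset ι, A ⊆ B → ∀ v ∉ B,
      f (insert v A) - f A ≥ f (insert v B) - f B)
    (A : Finset ι) :
    IsGreatest {r : ℝ | ∃ x : ι → ℝ, (∀ i, 0 ≤ x i) ∧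
      (∀ B : Finset ι, ∑ i ∈ B, x i ≤ f B) ∧ r = ∑ i ∈ A, x i} (f A) := by
  refine ⟨?_, ?_⟩
  · obtain ⟨x, ⟨hx0, hxf⟩, -, hsum⟩ := exists_mem_polymatroid_sum_eq hnorm hmono hsub A
    exact ⟨x, hx0, hxf, hsum.symm⟩
  · rintro r ⟨x, -, hxf, rfl⟩
    exact hxf A

/-- For a finite ground set `S` (modelled as a finite type `ι`) and a normalized
monotone submodular function `f : 2^S → ℝ`, for every `A ⊆ S` the value `f A` is
the supremum of `x(A)` over the polymatroid `P_f`, and this supremum is attained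
(i.e. `f A` is the greatest element of the set of such values). -/
theorem polymatroid_sup {ι : Type*} [Fintype ι] [DecidableEq ι]
    (f : Finset ι → ℝ)
    (hnorm : f ∅ = 0)
    (hmono : ∀ A B : Finset ι, A ⊆ B → f A ≤ f B)
    (hsub : ∀ A B : Finset ι, A ⊆ B → ∀ v ∉ B,
      f (insert v A) - f A ≥ f (insert v B) - f B)
    (A : Finset ι) :
    IsGreatest {r : ℝ | ∃ x : ι → ℝ, (∀ i, 0 ≤ x i) ∧
      (∀ B : Finset ι, ∑ i ∈ B, x i ≤ f B) ∧ r = ∑ i ∈ A, x i} (f A) :=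
  polymatroid_sup_general f hnorm hmono hsub A
end

section
/- Let S be a finite set and f : 2^S → ℝ a normalized monotone submodular function. For each A ⊆ S define g_A : 2^S → ℝ by g_A(B) = min( f(A) · |A ∩ B| , f(A) ) + ∑_{k ∈ B \ A} f({k}). Then for every B ⊆ S, f(B) = min_{A ⊆ S} g_A(B); that is, f equals the pointwise minimum of the family { g_A : A ⊆ S }. -/
/-!
Submodularity with `f ∅ = 0` makes `f` subadditive over singletons, so for every `A`,
`f B ≤ f (A ∩ B) + ∑_{k ∈ B \ A} f {k}`; monotonicity bounds `f (A ∩ B)` by `f A`, and also by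
`f A · |A ∩ B|` since that product is `0` when `A ∩ B = ∅` and at least `f A` otherwise.
Hence every `g_A` dominates `f`, and `g_B (B) = f B` attains the minimum.
-/

open Finset

namespace SetFunction

variable {ι : Type*} {f : Finset ι → ℝ}

theorem nonneg (hnorm : f ∅ = 0) (hmono : ∀ A B : Finset ι, A ⊆ B → f A ≤ f B)
    (A : Finset ι) : 0 ≤ f A :=
  hnorm ▸ hmono ∅ A (empty_subset A)

theorem le_mul_card_of_subset (hnorm : f ∅ = 0) (hmono : ∀ A B : Finset ι, A ⊆ B → f A ≤ f B)
    {A C : Finset ι} (hCA : C ⊆ A) : f C ≤ f A * #C := by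
  rcases C.eq_empty_or_nonempty with rfl | hC
  · simp [hnorm]
  · have hcard : (1 : ℝ) ≤ #C := by exact_mod_cast one_le_card.mpr hC
    nlinarith [hmono C A hCA, nonneg hnorm hmono A]

variable [DecidableEq ι]

-- `majorant f A B` is `g_A(B)`.
def majorant (f : Finset ι → ℝ) (A B : Finset ι) : ℝ :=
  min (f A * (#(A ∩ B) : ℝ)) (f A) + ∑ k ∈ B \ A, f {k}

theorem insert_le_add_singleton (hnorm : f ∅ = 0)
    (hsub : ∀ A B : Finset ι, A ⊆ B → ∀ v ∉ B, f (insert v A) - f A ≥ f (insert v B) - f B)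
    {D : Finset ι} {v : ι} (hv : v ∉ D) : f (insert v D) ≤ f D + f {v} := by
  have := hsub ∅ D (empty_subset D) v hv
  rw [insert_empty, hnorm] at this
  linarith

theorem union_le_add_sum_singleton (hnorm : f ∅ = 0)
    (hmono : ∀ A B : Finset ι, A ⊆ B → f A ≤ f B)
    (hsub : ∀ A B : Finset ι, A ⊆ B → ∀ v ∉ B, f (insert v A) - f A ≥ f (insert v B) - f B)
    (C T : Finset ι) : f (C ∪ T) ≤ f C + ∑ k ∈ T, f {k} := by
  induction T using Finset.induction_on with
  | empty => simp
  | insert v T hvT ih =>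
    rw [sum_insert hvT, union_insert]
    by_cases hv : v ∈ C ∪ T
    · rw [insert_eq_of_mem hv]
      linarith [nonneg hnorm hmono {v}]
    · linarith [insert_le_add_singleton hnorm hsub hv]

theorem le_majorant (hnorm : f ∅ = 0) (hmono : ∀ A B : Finset ι, A ⊆ B → f A ≤ f B)
    (hsub : ∀ A B : Finset ι, A ⊆ B → ∀ v ∉ B, f (insert v A) - f A ≥ f (insert v B) - f B)
    (A B : Finset ι) : f B ≤ majorant f A B := by
  have hinter : f (A ∩ B) ≤ min (f A * #(A ∩ B)) (f A) :=
    le_min (le_mul_card_of_subset hnorm hmono inter_subset_left) (hmono _ _ inter_subset_left)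
  have hsplit := union_le_add_sum_singleton hnorm hmono hsub (A ∩ B) (B \ A)
  have hB : A ∩ B ∪ B \ A = B := by rw [inter_comm, union_comm, sdiff_union_inter]
  rw [hB] at hsplit
  unfold majorant
  linarith

theorem majorant_self (hnorm : f ∅ = 0) (hmono : ∀ A B : Finset ι, A ⊆ B → f A ≤ f B)
    (B : Finset ι) : majorant f B B = f B := by
  rw [majorant, Finset.sdiff_self, sum_empty, add_zero, inter_self,
    min_eq_right (le_mul_card_of_subset hnorm hmono subset_rfl)]

end SetFunction

theorem f_eq_min_gA_general {ι : Type*} [DecidableEq ι]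
    (f : Finset ι → ℝ)
    (hnorm : f ∅ = 0)
    (hmono : ∀ A B : Finset ι, A ⊆ B → f A ≤ f B)
    (hsub : ∀ A B : Finset ι, A ⊆ B → ∀ v ∉ B,
      f (insert v A) - f A ≥ f (insert v B) - f B) :
    ∀ B : Finset ι,
      f B = ⨅ A : Finset ι,
        (min (f A * ((A ∩ B).card : ℝ)) (f A) + ∑ k ∈ B \ A, f {k}) := by
  intro B
  change f B = ⨅ A, SetFunction.majorant f A B
  have hle : ∀ A, f B ≤ SetFunction.majorant f A B :=
    fun A ↦ SetFunction.le_majorant hnorm hmono hsub A B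
  refine le_antisymm (le_ciInf hle) ?_
  exact (ciInf_le ⟨f B, Set.forall_mem_range.mpr hle⟩ B).trans
    (SetFunction.majorant_self hnorm hmono B).le

/-- For a finite ground set `S` (modelled as a finite type `ι`) and a normalized
monotone submodular function `f`, with
`g_A(B) = min(f(A)·|A ∩ B|, f(A)) + ∑_{k ∈ B \ A} f({k})`,
`f` equals the pointwise minimum over `A ⊆ S` of the functions `g_A`. -/
theorem f_eq_min_gA {ι : Type*} [Fintype ι] [DecidableEq ι]
    (f : Finset ι → ℝ)
    (hnorm : f ∅ = 0)
    (hmono : ∀ A B : Finset ι, A ⊆ B → f A ≤ f B)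
    (hsub : ∀ A B : Finset ι, A ⊆ B → ∀ v ∉ B,
      f (insert v A) - f A ≥ f (insert v B) - f B) :
    ∀ B : Finset ι,
      f B = ⨅ A : Finset ι,
        (min (f A * ((A ∩ B).card : ℝ)) (f A) + ∑ k ∈ B \ A, f {k}) :=
  f_eq_min_gA_general f hnorm hmono hsub
end

section
/- Let S be a finite set and f : 2^S → ℝ a monotone set function with f(∅) = 0 and f(A) ≥ 0 for all A ⊆ S. For each B ⊆ S define g_B : 2^S → ℝ by g_B(A) = min( f(B) · |A ∩ B| , f(B) ) + f(S) · |A \ B|. Then for every A ⊆ S, f(A) = min_{B ⊆ S} g_B(A); that is, f equals the pointwise minimum of the family { g_B : B ⊆ S }. -/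
/-- For a finite ground set `S` (modelled as a finite type `ι`) and a monotone,
normalized, nonnegative set function `f`, with
`g_B(A) = min(f(B)·|A ∩ B|, f(B)) + f(S)·|A \ B|`,
`f` equals the pointwise minimum over `B ⊆ S` of the family `g_B`. -/
theorem f_eq_min_gB {ι : Type*} [Fintype ι] [DecidableEq ι]
    (f : Finset ι → ℝ)
    (hnorm : f ∅ = 0)
    (hnonneg : ∀ A : Finset ι, 0 ≤ f A)
    (hmono : ∀ A B : Finset ι, A ⊆ B → f A ≤ f B) :
    ∀ A : Finset ι,
      f A = ⨅ B : Finset ι,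
        (min (f B * ((A ∩ B).card : ℝ)) (f B)
          + f Finset.univ * ((A \ B).card : ℝ)) := by
  intro A
  have hlb : ∀ B : Finset ι,
      f A ≤ min (f B * ((A ∩ B).card : ℝ)) (f B)
          + f Finset.univ * ((A \ B).card : ℝ) := by
    intro B
    by_cases hAB : A \ B = ∅
    · -- A ⊆ B
      have hsub : A ⊆ B := by
        intro x hx
        by_contra hxB
        exact (Finset.eq_empty_iff_forall_notMem.mp hAB x)
          (Finset.mem_sdiff.mpr ⟨hx, hxB⟩)
      rw [hAB]
      simp only [Finset.card_empty, Nat.cast_zero, mul_zero, add_zero]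
      have hfa : f A ≤ f B := hmono A B hsub
      rcases Finset.eq_empty_or_nonempty A with h | h
      · rw [h, hnorm]
        exact le_min (mul_nonneg (hnonneg B) (Nat.cast_nonneg _)) (hnonneg B)
      · have hcard : (1 : ℝ) ≤ ((A ∩ B).card : ℝ) := by
          have : 1 ≤ (A ∩ B).card := by
            have : (A ∩ B).Nonempty := by
              rwa [Finset.inter_eq_left.mpr hsub]
            exact Finset.card_pos.mpr this
          exact_mod_cast this
        refine le_min ?_ hfa
        calc f A ≤ f B := hfa
          _ = f B * 1 := by ring
          _ ≤ f B * ((A ∩ B).card : ℝ) :=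
              mul_le_mul_of_nonneg_left hcard (hnonneg B)
    · -- A \ B nonempty
      have hcard : (1 : ℝ) ≤ ((A \ B).card : ℝ) := by
        have : 1 ≤ (A \ B).card :=
          Finset.card_pos.mpr (Finset.nonempty_of_ne_empty hAB)
        exact_mod_cast this
      have h1 : f A ≤ f Finset.univ * ((A \ B).card : ℝ) := by
        calc f A ≤ f Finset.univ := hmono A _ (Finset.subset_univ A)
          _ = f Finset.univ * 1 := by ring
          _ ≤ f Finset.univ * ((A \ B).card : ℝ) :=
              mul_le_mul_of_nonneg_left hcard (hnonneg _)
      have h2 : 0 ≤ min (f B * ((A ∩ B).card : ℝ)) (f B) :=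
        le_min (mul_nonneg (hnonneg B) (Nat.cast_nonneg _)) (hnonneg B)
      linarith
  refine le_antisymm (le_ciInf hlb) ?_
  have hA : min (f A * ((A ∩ A).card : ℝ)) (f A)
      + f Finset.univ * ((A \ A).card : ℝ) = f A := by
    rw [Finset.sdiff_self, Finset.inter_self]
    simp only [Finset.card_empty, Nat.cast_zero, mul_zero, add_zero]
    rcases Finset.eq_empty_or_nonempty A with h | h
    · simp [h, hnorm]
    · have hcard : (1 : ℝ) ≤ (A.card : ℝ) := by
        exact_mod_cast Finset.card_pos.mpr h
      have : f A ≤ f A * (A.card : ℝ) := by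
        calc f A = f A * 1 := by ring
          _ ≤ f A * (A.card : ℝ) :=
            mul_le_mul_of_nonneg_left hcard (hnonneg A)
      exact min_eq_right this
  calc (⨅ B : Finset ι, (min (f B * ((A ∩ B).card : ℝ)) (f B)
          + f Finset.univ * ((A \ B).card : ℝ)))
      ≤ min (f A * ((A ∩ A).card : ℝ)) (f A)
          + f Finset.univ * ((A \ A).card : ℝ) :=
        ciInf_le (Finite.bddBelow_range _) A
    _ = f A := hA
end

section
/- Let S be a finite set and f : 2^S → ℝ a monotone set function with f(∅) = 0 and f(A) ≥ 0 for all A ⊆ S. Then there exist finitely many normalized monotone submodular functions h_1, …, h_r : 2^S → ℝ such that f(A) = min{ h_1(A), …, h_r(A) } for every A ⊆ S. -/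
/-- For a finite ground set `S` (modelled as a finite type `ι`) and a monotone,
normalized, nonnegative set function `f`, there exist finitely many normalized
monotone submodular functions `h 0, …, h (r-1)` whose pointwise minimum is `f`. -/
theorem monotone_eq_min_submodular {ι : Type*} [Fintype ι] [DecidableEq ι]
    (f : Finset ι → ℝ)
    (hnorm : f ∅ = 0)
    (hnonneg : ∀ A : Finset ι, 0 ≤ f A)
    (hmono : ∀ A B : Finset ι, A ⊆ B → f A ≤ f B) :
    ∃ (r : ℕ) (h : Fin r → Finset ι → ℝ), 0 < r ∧
      (∀ i : Fin r,
        h i ∅ = 0 ∧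
        (∀ A B : Finset ι, A ⊆ B → h i A ≤ h i B) ∧
        (∀ A B : Finset ι, A ⊆ B → ∀ v ∉ B,
          h i (insert v A) - h i A ≥ h i (insert v B) - h i B)) ∧
      (∀ A : Finset ι, f A = ⨅ i : Fin r, h i A) := by
  classical
  set M : ℝ := f Finset.univ with hMdef
  have hM0 : 0 ≤ M := hnonneg _
  have hMbig : ∀ A : Finset ι, f A ≤ M := fun A => hmono A _ (Finset.subset_univ A)
  set g : Finset ι → Finset ι → ℝ := fun B A =>
    M * ((A \ B).card : ℝ) + (if A ∩ B = ∅ then 0 else f B) with hgdef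
  have hind_nonneg : ∀ B A : Finset ι, (0:ℝ) ≤ (if A ∩ B = ∅ then 0 else f B) := by
    intro B A
    split <;> simp [hnonneg]
  have hg_nonneg : ∀ B A : Finset ι, 0 ≤ g B A := by
    intro B A
    have := hind_nonneg B A
    have : (0:ℝ) ≤ M * ((A \ B).card : ℝ) := by positivity
    simp only [hgdef]
    nlinarith [hind_nonneg B A]
  -- g dominates f
  have hdom : ∀ B A : Finset ι, f A ≤ g B A := by
    intro B A
    by_cases hAB : A ⊆ B
    · have hsd : A \ B = ∅ := Finset.sdiff_eq_empty_iff_subset.mpr hAB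
      have hi : A ∩ B = A := Finset.inter_eq_left.mpr hAB
      by_cases hA : A = ∅
      · simp [hgdef, hA, hnorm, hind_nonneg B ∅]
      · simp only [hgdef, hsd, hi, if_neg hA, Finset.card_empty]
        have := hmono A B hAB
        simp; linarith
    · have : (A \ B).Nonempty := by
        rw [Finset.sdiff_nonempty]; exact hAB
      have hc : (1:ℝ) ≤ ((A \ B).card : ℝ) := by
        exact_mod_cast Finset.card_pos.mpr this
      have h1 : f A ≤ M := hMbig A
      have h2 : M ≤ M * ((A \ B).card : ℝ) := le_mul_of_one_le_right hM0 hc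
      have := hind_nonneg B A
      simp only [hgdef]; linarith
  -- g B B = f B
  have hdiag : ∀ B : Finset ι, g B B = f B := by
    intro B
    by_cases hB : B = ∅
    · simp [hgdef, hB, hnorm]
    · simp [hgdef, Finset.inter_self, hB, hnorm]
  -- normalized
  have hnorm' : ∀ B : Finset ι, g B ∅ = 0 := by
    intro B; simp [hgdef]
  -- monotone
  have hmono' : ∀ B A C : Finset ι, A ⊆ C → g B A ≤ g B C := by
    intro B A C hAC
    have h1 : ((A \ B).card : ℝ) ≤ ((C \ B).card : ℝ) := by
      exact_mod_cast Finset.card_le_card (Finset.sdiff_subset_sdiff hAC le_rfl)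
    have h2 : (if A ∩ B = ∅ then (0:ℝ) else f B) ≤ (if C ∩ B = ∅ then 0 else f B) := by
      by_cases hC : C ∩ B = ∅
      · have hA : A ∩ B = ∅ := by
          rw [← Finset.subset_empty, ← hC]
          exact Finset.inter_subset_inter hAC le_rfl
        simp [hA, hC]
      · simp only [if_neg hC]
        split
        · exact hnonneg B
        · exact le_rfl
    simp only [hgdef]
    have := mul_le_mul_of_nonneg_left h1 hM0
    linarith
  -- marginal card fact
  have hcard : ∀ B A : Finset ι, ∀ v, v ∉ A →
      ((insert v A \ B).card : ℝ) = ((A \ B).card : ℝ) + (if v ∈ B then 0 else 1) := by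
    intro B A v hv
    by_cases hvB : v ∈ B
    · rw [Finset.insert_sdiff_of_mem _ hvB]; simp [hvB]
    · rw [Finset.insert_sdiff_of_notMem _ hvB, Finset.card_insert_of_notMem (by simp [hv])]
      push_cast; simp [hvB]
  -- submodular
  have hsub : ∀ B A C : Finset ι, A ⊆ C → ∀ v ∉ C,
      g B (insert v A) - g B A ≥ g B (insert v C) - g B C := by
    intro B A C hAC v hvC
    have hvA : v ∉ A := fun h => hvC (hAC h)
    have e1 := hcard B A v hvA
    have e2 := hcard B C v hvC
    by_cases hvB : v ∈ B
    · have iA : insert v A ∩ B = insert v (A ∩ B) := by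
        rw [Finset.insert_inter_of_mem hvB]
      have iC : insert v C ∩ B = insert v (C ∩ B) := by
        rw [Finset.insert_inter_of_mem hvB]
      have nA : insert v A ∩ B ≠ ∅ := by simp [iA]
      have nC : insert v C ∩ B ≠ ∅ := by simp [iC]
      simp only [hgdef, e1, e2, if_neg nA, if_neg nC, if_pos hvB]
      by_cases hA : A ∩ B = ∅
      · have h2 : (if C ∩ B = ∅ then (0:ℝ) else f B) ≤ f B := by
          split
          · exact hnonneg B
          · exact le_rfl
        simp only [if_pos hA]
        push_cast; linarith [hind_nonneg B C, hind_nonneg B A]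
      · have hC : C ∩ B ≠ ∅ := by
          intro h
          exact hA (by rw [← Finset.subset_empty, ← h]; exact Finset.inter_subset_inter hAC le_rfl)
        simp only [if_neg hA, if_neg hC]
        push_cast; linarith [hind_nonneg B C, hind_nonneg B A]
    · have iA : insert v A ∩ B = A ∩ B := by
        rw [Finset.insert_inter_of_notMem hvB]
      have iC : insert v C ∩ B = C ∩ B := by
        rw [Finset.insert_inter_of_notMem hvB]
      simp only [hgdef, e1, e2, iA, iC, if_neg hvB]
      push_cast; linarith [hind_nonneg B C, hind_nonneg B A]
  -- assemble
  set r : ℕ := Fintype.card (Finset ι) with hr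
  have hrpos : 0 < r := Fintype.card_pos
  set e : Fin r ≃ Finset ι := (Fintype.equivFin (Finset ι)).symm with he
  refine ⟨r, fun i => g (e i), hrpos, fun i => ⟨hnorm' _, fun A B h => hmono' _ _ _ h,
    fun A B h v hv => hsub _ _ _ h v hv⟩, fun A => ?_⟩
  have hbdd : BddBelow (Set.range fun i : Fin r => g (e i) A) := by
    apply Set.Finite.bddBelow
    exact Set.finite_range _
  apply le_antisymm
  · exact le_ciInf fun i => hdom (e i) A
  · have : (⨅ i : Fin r, g (e i) A) ≤ g (e (e.symm A)) A := ciInf_le hbdd (e.symm A)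
    rwa [Equiv.apply_symm_apply, hdiag] at this
end

section
/- Let S be a finite set. A set function f : 2^S → ℝ satisfies (f is monotone, f(∅) = 0, and f(A) ≥ 0 for all A) if and only if there exist finitely many subsets A_1, …, A_r ⊆ S, nonnegative reals c_1, …, c_r, and nonnegative weight functions w^{(1)}, …, w^{(r)} : S → ℝ≥0 such that for every B ⊆ S, f(B) = min_{1 ≤ i ≤ r} [ min( c_i · |A_i ∩ B| , c_i ) + ∑_{k ∈ B \ A_i} w^{(i)}_k ]. -/
/-- For a finite ground set `S` (modelled as a finite type `ι`), a set function
`f` is monotone, normalized and nonnegative if and only if there exist finitely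
many subsets `A i ⊆ S`, nonnegative reals `c i`, and nonnegative weights `w i`
such that for every `B ⊆ S`,
`f B = min_i [ min(c i·|A i ∩ B|, c i) + ∑_{k ∈ B \ A i} w i k ]`. -/
theorem monotone_iff_min_of_SCMMs {ι : Type*} [Fintype ι] [DecidableEq ι]
    (f : Finset ι → ℝ) :
    ((∀ A B : Finset ι, A ⊆ B → f A ≤ f B) ∧ f ∅ = 0 ∧ ∀ A : Finset ι, 0 ≤ f A)
      ↔
    (∃ (r : ℕ) (A : Fin r → Finset ι) (c : Fin r → ℝ) (w : Fin r → ι → ℝ),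
      0 < r ∧ (∀ i, 0 ≤ c i) ∧ (∀ i k, 0 ≤ w i k) ∧
      ∀ B : Finset ι,
        f B = ⨅ i : Fin r,
          (min (c i * ((A i ∩ B).card : ℝ)) (c i) + ∑ k ∈ B \ A i, w i k)) := by
  constructor
  · rintro ⟨hmono, hempty, hnonneg⟩
    set e := (Fintype.equivFin (Finset ι)).symm with he
    set M : ℝ := Finset.univ.sup' ⟨∅, Finset.mem_univ _⟩ f with hM
    have hMle : ∀ B, f B ≤ M := fun B => Finset.le_sup' f (Finset.mem_univ B)
    have hM0 : 0 ≤ M := le_trans (hnonneg ∅) (hMle ∅)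
    refine ⟨Fintype.card (Finset ι), fun i => e i, fun i => f (e i), fun _ _ => M,
      Fintype.card_pos, fun i => hnonneg _, fun _ _ => hM0, fun B => ?_⟩
    have hbdd : BddBelow (Set.range fun i : Fin (Fintype.card (Finset ι)) =>
        min (f (e i) * ((e i ∩ B).card : ℝ)) (f (e i)) + ∑ k ∈ B \ e i, M) :=
      (Set.finite_range _).bddBelow
    apply le_antisymm
    · refine le_ciInf fun i => ?_
      by_cases h : B ⊆ e i
      · rw [Finset.sdiff_eq_empty_iff_subset.mpr h, Finset.sum_empty, add_zero,
          Finset.inter_eq_right.mpr h]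
        rcases B.eq_empty_or_nonempty with rfl | hB
        · simp [hempty, le_min_iff, hnonneg]
        · have h1 : (1 : ℝ) ≤ (B.card : ℝ) := by exact_mod_cast Finset.card_pos.mpr hB
          have := hmono B (e i) h
          refine le_min (le_trans this ?_) this
          nlinarith [hnonneg (e i)]
      · have hne : (B \ e i).Nonempty := by
          rw [← Finset.sdiff_eq_empty_iff_subset] at h
          exact Finset.nonempty_iff_ne_empty.mpr h
        have h1 : (1 : ℝ) ≤ ((B \ e i).card : ℝ) := by
          exact_mod_cast Finset.card_pos.mpr hne
        have hsum : M ≤ ∑ k ∈ B \ e i, M := by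
          rw [Finset.sum_const, nsmul_eq_mul]
          nlinarith
        have hmin : 0 ≤ min (f (e i) * ((e i ∩ B).card : ℝ)) (f (e i)) :=
          le_min (mul_nonneg (hnonneg _) (Nat.cast_nonneg _)) (hnonneg _)
        linarith [hMle B]
    · have := ciInf_le hbdd (e.symm B)
      refine le_trans this ?_
      simp only [Equiv.apply_symm_apply, Finset.inter_self, Finset.sdiff_self,
        Finset.sum_empty, add_zero]
      rcases B.eq_empty_or_nonempty with rfl | hB
      · simp [hempty]
      · have h1 : (1 : ℝ) ≤ (B.card : ℝ) := by exact_mod_cast Finset.card_pos.mpr hB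
        have : f B ≤ f B * (B.card : ℝ) := by nlinarith [hnonneg B]
        rw [min_eq_right this]
  · rintro ⟨r, A, c, w, hr, hc, hw, hf⟩
    have : Nonempty (Fin r) := ⟨⟨0, hr⟩⟩
    have hterm : ∀ (i : Fin r) (B : Finset ι),
        0 ≤ min (c i * ((A i ∩ B).card : ℝ)) (c i) + ∑ k ∈ B \ A i, w i k :=
      fun i B => add_nonneg (le_min (mul_nonneg (hc i) (Nat.cast_nonneg _)) (hc i))
        (Finset.sum_nonneg fun k _ => hw i k)
    have hbdd : ∀ B : Finset ι, BddBelow (Set.range fun i : Fin r =>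
        min (c i * ((A i ∩ B).card : ℝ)) (c i) + ∑ k ∈ B \ A i, w i k) :=
      fun B => (Set.finite_range _).bddBelow
    refine ⟨fun X Y hXY => ?_, ?_, fun B => ?_⟩
    · rw [hf X, hf Y]
      refine le_ciInf fun i => le_trans (ciInf_le (hbdd X) i) ?_
      have h1 : min (c i * ((A i ∩ X).card : ℝ)) (c i)
          ≤ min (c i * ((A i ∩ Y).card : ℝ)) (c i) := by
        refine min_le_min (mul_le_mul_of_nonneg_left ?_ (hc i)) le_rfl
        exact_mod_cast Finset.card_le_card (Finset.inter_subset_inter le_rfl hXY)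
      have h2 : ∑ k ∈ X \ A i, w i k ≤ ∑ k ∈ Y \ A i, w i k :=
        Finset.sum_le_sum_of_subset_of_nonneg (Finset.sdiff_subset_sdiff hXY le_rfl)
          (fun k _ _ => hw i k)
      linarith
    · rw [hf ∅]
      simp [ciInf_const, min_eq_left, hc, mul_nonneg]
    · rw [hf B]
      exact le_ciInf fun i => hterm i B
end

section
/- Let S be a finite set and f : 2^S → ℝ a normalized monotone submodular function. Then f equals the pointwise minimum of a finite family of normalized monotone submodular functions each of the form B ↦ min( c · |A ∩ B| , c ) + ∑_{k ∈ B \ A} w_k with A ⊆ S, c ≥ 0, and nonnegative weights w_k; in particular a family of size at most 2^{|S|} suffices. -/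
/-!
For `c ≥ 0`, `min (c * #(A ∩ B)) c` is `0` or `c` according as `A` and `B` are disjoint or not.
Take `c = f A` and `w k = f {k}`. Submodularity and `f ∅ = 0` give
`f B ≤ f (A ∩ B) + ∑_{k ∈ B \ A} f {k}`, and `f (A ∩ B)` is `0` for disjoint `A`, `B` and at most
`f A` by monotonicity otherwise, so `f` lies below the function attached to `A`. For `A = B` that
function equals `f B` at `B`, so `f` is the minimum over all `2 ^ |S|` choices of `A`.
-/

open Finset

section Scmm

variable {ι : Type*} [DecidableEq ι]

def scmm (A : Finset ι) (c : ℝ) (w : ι → ℝ) (B : Finset ι) : ℝ :=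
  min (c * (#(A ∩ B) : ℝ)) c + ∑ k ∈ B \ A, w k

lemma scmm_eq_ite {A : Finset ι} {c : ℝ} (hc : 0 ≤ c) (w : ι → ℝ) (B : Finset ι) :
    scmm A c w B = (if Disjoint A B then 0 else c) + ∑ k ∈ B \ A, w k := by
  unfold scmm
  congr 1
  split_ifs with hAB
  · simp [disjoint_iff_inter_eq_empty.mp hAB, hc]
  · have hpos : (1 : ℝ) ≤ #(A ∩ B) := by
      exact_mod_cast card_pos.mpr (not_disjoint_iff_nonempty_inter.mp hAB)
    exact min_eq_right (le_mul_of_one_le_right hc hpos)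

lemma scmm_empty {A : Finset ι} {c : ℝ} (hc : 0 ≤ c) (w : ι → ℝ) : scmm A c w ∅ = 0 := by
  simp [scmm_eq_ite hc]

lemma scmm_self {c : ℝ} (hc : 0 ≤ c) (w : ι → ℝ) (B : Finset ι) :
    scmm B c w B = if B = ∅ then 0 else c := by
  simp [scmm_eq_ite hc]

lemma scmm_mono {A : Finset ι} {c : ℝ} {w : ι → ℝ} (hc : 0 ≤ c) (hw : ∀ k, 0 ≤ w k) :
    Monotone (scmm A c w) := by
  intro B₁ B₂ hB
  simp only [scmm_eq_ite hc]
  gcongr ?_ + ?_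
  · by_cases h₂ : Disjoint A B₂
    · simp [h₂, h₂.mono_right hB]
    · rw [if_neg h₂]
      split_ifs <;> linarith
  · exact sum_le_sum_of_subset_of_nonneg (sdiff_subset_sdiff hB subset_rfl) fun k _ _ => hw k

lemma scmm_insert_sub {A : Finset ι} {c : ℝ} (hc : 0 ≤ c) (w : ι → ℝ) {B : Finset ι} {v : ι}
    (hv : v ∉ B) :
    scmm A c w (insert v B) - scmm A c w B =
      (if v ∈ A ∧ Disjoint A B then c else 0) + if v ∈ A then 0 else w v := by
  simp only [scmm_eq_ite hc]
  by_cases hvA : v ∈ A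
  · have hmeet : ¬ Disjoint A (insert v B) := not_disjoint_iff.mpr ⟨v, hvA, mem_insert_self v B⟩
    rw [insert_sdiff_of_mem _ hvA]
    simp only [hmeet, hvA, true_and, if_true, if_false, add_zero]
    split_ifs <;> ring
  · have hdisj : Disjoint A (insert v B) ↔ Disjoint A B := by
      simp [disjoint_insert_right, hvA]
    rw [insert_sdiff_of_notMem _ hvA, sum_insert fun h => hv (mem_sdiff.mp h).1]
    simp only [hdisj, hvA, false_and, if_false]
    ring

lemma scmm_submodular {A : Finset ι} {c : ℝ} (hc : 0 ≤ c) (w : ι → ℝ) {B₁ B₂ : Finset ι}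
    (hB : B₁ ⊆ B₂) {v : ι} (hv : v ∉ B₂) :
    scmm A c w (insert v B₂) - scmm A c w B₂ ≤ scmm A c w (insert v B₁) - scmm A c w B₁ := by
  rw [scmm_insert_sub hc w hv, scmm_insert_sub hc w fun h => hv (hB h)]
  gcongr ?_ + _
  by_cases h₂ : v ∈ A ∧ Disjoint A B₂
  · simp [h₂.1, h₂.2, h₂.2.mono_right hB]
  · rw [if_neg h₂]
    split_ifs <;> linarith

end Scmm

section SetFunction

variable {ι : Type*} [DecidableEq ι] {f : Finset ι → ℝ}

lemma le_add_sum_singleton (hnorm : f ∅ = 0)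
    (hsub : ∀ A B : Finset ι, A ⊆ B → ∀ v ∉ B, f (insert v A) - f A ≥ f (insert v B) - f B)
    {X T : Finset ι} (hXT : Disjoint X T) : f (X ∪ T) ≤ f X + ∑ k ∈ T, f {k} := by
  induction T using Finset.induction_on with
  | empty => simp
  | @insert a T ha ih =>
    have haXT : a ∉ X ∪ T := by
      simp [ha, disjoint_insert_right.mp hXT |>.1]
    have hstep := hsub ∅ (X ∪ T) (empty_subset _) a haXT
    rw [hnorm, insert_empty] at hstep
    rw [union_insert, sum_insert ha]
    linarith [ih (disjoint_insert_right.mp hXT).2]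

lemma le_scmm (hnorm : f ∅ = 0) (hmono : ∀ A B : Finset ι, A ⊆ B → f A ≤ f B)
    (hsub : ∀ A B : Finset ι, A ⊆ B → ∀ v ∉ B, f (insert v A) - f A ≥ f (insert v B) - f B)
    (A B : Finset ι) : f B ≤ scmm A (f A) (fun k => f {k}) B := by
  have hfA : 0 ≤ f A := hnorm ▸ hmono ∅ A (empty_subset A)
  have hinter : f (A ∩ B) ≤ if Disjoint A B then 0 else f A := by
    split_ifs with hAB
    · rw [disjoint_iff_inter_eq_empty.mp hAB, hnorm]
    · exact hmono _ _ inter_subset_left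
  calc f B = f (A ∩ B ∪ B \ A) := by rw [union_comm, inter_comm, sdiff_union_inter]
    _ ≤ f (A ∩ B) + ∑ k ∈ B \ A, f {k} :=
      le_add_sum_singleton hnorm hsub (disjoint_sdiff.mono_left inter_subset_left)
    _ ≤ scmm A (f A) (fun k => f {k}) B := by
      rw [scmm_eq_ite hfA]
      gcongr

theorem eq_iInf_scmm [Fintype ι] (hnorm : f ∅ = 0) (hmono : ∀ A B : Finset ι, A ⊆ B → f A ≤ f B)
    (hsub : ∀ A B : Finset ι, A ⊆ B → ∀ v ∉ B, f (insert v A) - f A ≥ f (insert v B) - f B)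
    (B : Finset ι) : f B = ⨅ A : Finset ι, scmm A (f A) (fun k => f {k}) B := by
  have hfB : 0 ≤ f B := hnorm ▸ hmono ∅ B (empty_subset B)
  refine le_antisymm (le_ciInf fun A => le_scmm hnorm hmono hsub A B) ?_
  refine ciInf_le_of_le (Finite.bddBelow_range _) B ?_
  rw [scmm_self hfB]
  split_ifs with hB
  · rw [hB, hnorm]
  · exact le_rfl

end SetFunction

/-- For a finite ground set `S` (modelled as a finite type `ι`) and a normalized
monotone submodular function `f`, `f` is the pointwise minimum of a finite family
(of size at most `2^|S|`) of normalized monotone submodular functions, each of the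
form `B ↦ min(c·|A ∩ B|, c) + ∑_{k ∈ B \ A} w k` with `A ⊆ S`, `c ≥ 0` and
nonnegative weights `w`. -/
theorem submodular_eq_min_of_SCMMs {ι : Type*} [Fintype ι] [DecidableEq ι]
    (f : Finset ι → ℝ)
    (hnorm : f ∅ = 0)
    (hmono : ∀ A B : Finset ι, A ⊆ B → f A ≤ f B)
    (hsub : ∀ A B : Finset ι, A ⊆ B → ∀ v ∉ B,
      f (insert v A) - f A ≥ f (insert v B) - f B) :
    ∃ (r : ℕ) (A : Fin r → Finset ι) (c : Fin r → ℝ) (w : Fin r → ι → ℝ),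
      0 < r ∧ r ≤ 2 ^ (Fintype.card ι) ∧
      (∀ i, 0 ≤ c i) ∧ (∀ i k, 0 ≤ w i k) ∧
      (∀ i : Fin r,
        let g : Finset ι → ℝ := fun B =>
          min (c i * ((A i ∩ B).card : ℝ)) (c i) + ∑ k ∈ B \ A i, w i k
        g ∅ = 0 ∧
        (∀ B₁ B₂ : Finset ι, B₁ ⊆ B₂ → g B₁ ≤ g B₂) ∧
        (∀ B₁ B₂ : Finset ι, B₁ ⊆ B₂ → ∀ v ∉ B₂,
          g (insert v B₁) - g B₁ ≥ g (insert v B₂) - g B₂)) ∧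
      (∀ B : Finset ι,
        f B = ⨅ i : Fin r,
          (min (c i * ((A i ∩ B).card : ℝ)) (c i) + ∑ k ∈ B \ A i, w i k)) := by
  have hf0 : ∀ X, 0 ≤ f X := fun X => hnorm ▸ hmono ∅ X (empty_subset X)
  let e : Fin (2 ^ Fintype.card ι) ≃ Finset ι :=
    (Fintype.equivFinOfCardEq Fintype.card_finset).symm
  refine ⟨_, e, fun i => f (e i), fun _ k => f {k}, Nat.two_pow_pos _, le_rfl,
    fun _ => hf0 _, fun _ _ => hf0 _, fun _ => ⟨scmm_empty (hf0 _) _,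
      scmm_mono (hf0 _) fun _ => hf0 _, fun _ _ hB _ hv => scmm_submodular (hf0 _) _ hB hv⟩,
    fun B => ?_⟩
  exact (eq_iInf_scmm hnorm hmono hsub B).trans (Equiv.iInf_comp e).symm
end

section
/- Let S be a finite set and f : 2^S → ℝ a normalized monotone submodular function. For each A ⊆ S let g_A(B) = min( f(A) · |A ∩ B| , f(A) ) + ∑_{k ∈ B \ A} f({k}), and let g(B) = min_{A ⊆ S} g_A(B). Then the polymatroid of g equals the polymatroid of f, i.e., { x ∈ ℝ^S : x ≥ 0 componentwise and x(B) ≤ g(B) for all B ⊆ S } = P_f. -/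
/-- For a finite ground set `S` (modelled as a finite type `ι`) and a normalized
monotone submodular function `f`, with
`g_A(B) = min(f(A)·|A ∩ B|, f(A)) + ∑_{k ∈ B \ A} f({k})` and
`g(B) = min_{A ⊆ S} g_A(B)`, the polymatroid of `g` equals `P_f`. -/
theorem polymatroid_g_eq_polymatroid_f {ι : Type*} [Fintype ι] [DecidableEq ι]
    (f : Finset ι → ℝ)
    (hnorm : f ∅ = 0)
    (hmono : ∀ A B : Finset ι, A ⊆ B → f A ≤ f B)
    (hsub : ∀ A B : Finset ι, A ⊆ B → ∀ v ∉ B,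
      f (insert v A) - f A ≥ f (insert v B) - f B)
    (g : Finset ι → ℝ)
    (hg : ∀ B : Finset ι,
      g B = ⨅ A : Finset ι,
        (min (f A * ((A ∩ B).card : ℝ)) (f A) + ∑ k ∈ B \ A, f {k})) :
    {x : ι → ℝ | (∀ i, 0 ≤ x i) ∧ ∀ B : Finset ι, ∑ i ∈ B, x i ≤ g B}
      = {x : ι → ℝ | (∀ i, 0 ≤ x i) ∧ ∀ B : Finset ι, ∑ i ∈ B, x i ≤ f B} := by
  have hf0 : ∀ A : Finset ι, 0 ≤ f A := fun A =>
    hnorm ▸ hmono ∅ A (Finset.empty_subset A)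
  ext x
  simp only [Set.mem_setOf_eq]
  constructor
  · rintro ⟨hx, hB⟩
    refine ⟨hx, fun B => ?_⟩
    refine (hB B).trans ?_
    rw [hg B]
    have h1 : (⨅ A : Finset ι,
        (min (f A * ((A ∩ B).card : ℝ)) (f A) + ∑ k ∈ B \ A, f {k}))
        ≤ min (f B * ((B ∩ B).card : ℝ)) (f B) + ∑ k ∈ B \ B, f {k} :=
      ciInf_le (Set.Finite.bddBelow (Set.finite_range _)) B
    refine h1.trans ?_
    simp only [Finset.inter_self, Finset.sdiff_self, Finset.sum_empty, add_zero]
    exact min_le_right _ _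
  · rintro ⟨hx, hB⟩
    refine ⟨hx, fun B => ?_⟩
    rw [hg B]
    refine le_ciInf fun A => ?_
    rw [← Finset.sum_inter_add_sum_sdiff B A x]
    refine add_le_add ?_ ?_
    · refine le_min ?_ ?_
      · calc ∑ i ∈ B ∩ A, x i ≤ ∑ _i ∈ B ∩ A, f A := by
              refine Finset.sum_le_sum fun i hi => ?_
              refine le_trans (by simpa using hB {i}) (hmono {i} A ?_)
              simpa using (Finset.mem_inter.mp hi).2
          _ = f A * ((A ∩ B).card : ℝ) := by
              rw [Finset.sum_const, Finset.inter_comm A B, nsmul_eq_mul, mul_comm]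
      · exact le_trans (hB _) (hmono _ _ Finset.inter_subset_right)
    · exact Finset.sum_le_sum fun k _ => by simpa using hB {k}
end
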